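/- Let A be a dual quasi-Hopf algebra. Then every grouplike element g of A is invertible in the (not necessarily associative) algebra A, with two-sided inverse S(g). -/

import Mathlib

set_option autoImplicit false

open TensorProduct Coalgebra

namespace DualQH

variable (k A : Type*) [Field k] [AddCommGroup A] [Module k A] [Coalgebra k A]

/-- `Δ² a = ∑ a₁ ⊗ (a₂ ⊗ a₃)`. -/
noncomputable def D2 : A →ₗ[k] A ⊗[k] (A ⊗[k] A) :=
  (TensorProduct.map LinearMap.id comul) ∘ₗ comul

/-- `Δ⁴ a = ∑ a₁ ⊗ (a₂ ⊗ (a₃ ⊗ (a₄ ⊗ a₅)))`. -/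
noncomputable def D4 : A →ₗ[k] A ⊗[k] (A ⊗[k] (A ⊗[k] (A ⊗[k] A))) :=
  (TensorProduct.map LinearMap.id
    (TensorProduct.map LinearMap.id (TensorProduct.map LinearMap.id comul))) ∘ₗ
  (TensorProduct.map LinearMap.id (TensorProduct.map LinearMap.id comul)) ∘ₗ
  (D2 k A)

/-- `∑ (a₁ ⊗ (b₁ ⊗ c₁)) ⊗ (a₂ ⊗ (b₂ ⊗ c₂))`. -/
noncomputable def threeSplit (a b c : A) :
    (A ⊗[k] (A ⊗[k] A)) ⊗[k] (A ⊗[k] (A ⊗[k] A)) :=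
  (TensorProduct.tensorTensorTensorComm k A A (A ⊗[k] A) (A ⊗[k] A))
    (comul a ⊗ₜ[k]
      ((TensorProduct.tensorTensorTensorComm k A A A A) (comul b ⊗ₜ[k] comul c)))

/-- `∑ (a₁ ⊗ (b₁ ⊗ (c₁ ⊗ d₁))) ⊗ (a₂ ⊗ (b₂ ⊗ (c₂ ⊗ d₂)))`. -/
noncomputable def fourSplit (a b c d : A) :
    (A ⊗[k] (A ⊗[k] (A ⊗[k] A))) ⊗[k] (A ⊗[k] (A ⊗[k] (A ⊗[k] A))) :=
  (TensorProduct.tensorTensorTensorComm k A A (A ⊗[k] (A ⊗[k] A)) (A ⊗[k] (A ⊗[k] A)))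
    (comul a ⊗ₜ[k]
      ((TensorProduct.tensorTensorTensorComm k A A (A ⊗[k] A) (A ⊗[k] A))
        (comul b ⊗ₜ[k]
          ((TensorProduct.tensorTensorTensorComm k A A A A) (comul c ⊗ₜ[k] comul d)))))

variable {M N : Type*} [AddCommGroup M] [Module k M] [AddCommGroup N] [Module k N]

/-- Interleaving `(m₁ ⊗ (m₂ ⊗ m₃)) ⊗ (n₁ ⊗ (n₂ ⊗ n₃))` as
`(m₁ ⊗ n₁) ⊗ ((m₂ ⊗ n₂) ⊗ (m₃ ⊗ n₃))`. -/
noncomputable def mix3 :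
    ((M ⊗[k] (M ⊗[k] M)) ⊗[k] (N ⊗[k] (N ⊗[k] N))) →ₗ[k]
      ((M ⊗[k] N) ⊗[k] ((M ⊗[k] N) ⊗[k] (M ⊗[k] N))) :=
  (TensorProduct.map LinearMap.id
      (TensorProduct.tensorTensorTensorComm k M M N N).toLinearMap) ∘ₗ
  (TensorProduct.tensorTensorTensorComm k M (M ⊗[k] M) N (N ⊗[k] N)).toLinearMap

/-- `∑ (a₁ ⊗ (b₁ ⊗ (c₁ ⊗ d₁))) ⊗ ((a₂ ⊗ (b₂ ⊗ (c₂ ⊗ d₂))) ⊗ (a₃ ⊗ (b₃ ⊗ (c₃ ⊗ d₃))))`. -/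
noncomputable def fourSplit3 (a b c d : A) :
    (A ⊗[k] (A ⊗[k] (A ⊗[k] A))) ⊗[k]
      ((A ⊗[k] (A ⊗[k] (A ⊗[k] A))) ⊗[k] (A ⊗[k] (A ⊗[k] (A ⊗[k] A)))) :=
  mix3 k ((D2 k A a) ⊗ₜ[k]
    (mix3 k ((D2 k A b) ⊗ₜ[k] (mix3 k ((D2 k A c) ⊗ₜ[k] (D2 k A d))))))

end DualQH

open DualQH

/-- A dual quasi-Hopf algebra (Majid): a coassociative coalgebra `A` with a coalgebra
morphism `mul` which is only quasi-associative with respect to a reassociator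
`φ ∈ (A ⊗ A ⊗ A)*`, a unit, a coalgebra anti-morphism `S` and functionals
`α, β ∈ A*` satisfying the antipode axioms. -/
structure DualQuasiHopfAlgebra (k A : Type*) [Field k] [AddCommGroup A] [Module k A]
    [Coalgebra k A] where
  mul : A →ₗ[k] A →ₗ[k] A
  one : A
  phi : A →ₗ[k] A →ₗ[k] A →ₗ[k] k
  phiInv : A →ₗ[k] A →ₗ[k] A →ₗ[k] k
  S : A →ₗ[k] A
  alpha : A →ₗ[k] k
  beta : A →ₗ[k] k
  /-- `M : A ⊗ A → A` is a coalgebra morphism: `Δ(ab) = ∑ a₁b₁ ⊗ a₂b₂`. -/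
  mul_comul : ∀ a b : A,
    comul (mul a b)
      = (TensorProduct.map (TensorProduct.lift mul) (TensorProduct.lift mul))
          ((TensorProduct.tensorTensorTensorComm k A A A A) (comul a ⊗ₜ[k] comul b))
  mul_counit : ∀ a b : A, counit (R := k) (mul a b) = counit (R := k) a * counit (R := k) b
  one_comul : comul one = one ⊗ₜ[k] one
  one_counit : counit (R := k) (one : A) = (1 : k)
  one_mul : ∀ a : A, mul one a = a
  mul_one : ∀ a : A, mul a one = a
  /-- Quasi-associativity: `∑ a₁(b₁c₁) φ(a₂,b₂,c₂) = ∑ φ(a₁,b₁,c₁) (a₂b₂)c₂`. -/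
  quasi_assoc : ∀ a b c : A,
    (TensorProduct.rid k A)
      ((TensorProduct.map
          ((TensorProduct.lift mul) ∘ₗ
            (TensorProduct.map LinearMap.id (TensorProduct.lift mul)))
          (TensorProduct.lift ((TensorProduct.lift.equiv (RingHom.id k) A A k).toLinearMap ∘ₗ phi)))
        (threeSplit k A a b c))
    = (TensorProduct.lid k A)
      ((TensorProduct.map
          (TensorProduct.lift ((TensorProduct.lift.equiv (RingHom.id k) A A k).toLinearMap ∘ₗ phi))
          ((TensorProduct.lift mul) ∘ₗ
            (TensorProduct.map (TensorProduct.lift mul) LinearMap.id) ∘ₗ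
            (TensorProduct.assoc k A A A).symm.toLinearMap))
        (threeSplit k A a b c))
  /-- The 3-cocycle condition
  `∑ φ(a₁,b₁,c₁d₁) φ(a₂b₂,c₂,d₂) = ∑ φ(b₁,c₁,d₁) φ(a₁,b₂c₂,d₂) φ(a₂,b₃,c₃)`. -/
  cocycle : ∀ a b c d : A,
    (LinearMap.mul' k k)
      ((TensorProduct.map
          ((TensorProduct.lift ((TensorProduct.lift.equiv (RingHom.id k) A A k).toLinearMap ∘ₗ phi)) ∘ₗ
            (TensorProduct.map LinearMap.id
              (TensorProduct.map LinearMap.id (TensorProduct.lift mul))))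
          ((TensorProduct.lift ((TensorProduct.lift.equiv (RingHom.id k) A A k).toLinearMap ∘ₗ phi)) ∘ₗ
            (TensorProduct.map (TensorProduct.lift mul) LinearMap.id) ∘ₗ
            (TensorProduct.assoc k A A (A ⊗[k] A)).symm.toLinearMap))
        (fourSplit k A a b c d))
    = (LinearMap.mul' k k)
      ((TensorProduct.map
          ((LinearMap.mul' k k) ∘ₗ
            (TensorProduct.map counit
              (TensorProduct.lift ((TensorProduct.lift.equiv (RingHom.id k) A A k).toLinearMap ∘ₗ phi))))
          ((LinearMap.mul' k k) ∘ₗ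
            (TensorProduct.map
              ((TensorProduct.lift ((TensorProduct.lift.equiv (RingHom.id k) A A k).toLinearMap ∘ₗ phi)) ∘ₗ
                (TensorProduct.map LinearMap.id
                  ((TensorProduct.map (TensorProduct.lift mul) LinearMap.id) ∘ₗ
                    (TensorProduct.assoc k A A A).symm.toLinearMap)))
              (((LinearMap.mul' k k) ∘ₗ
                (TensorProduct.map
                  (TensorProduct.lift ((TensorProduct.lift.equiv (RingHom.id k) A A k).toLinearMap ∘ₗ phi))
                  counit) ∘ₗ
                (TensorProduct.assoc k A (A ⊗[k] A) A).symm.toLinearMap ∘ₗ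
                (TensorProduct.map LinearMap.id
                  (TensorProduct.assoc k A A A).symm.toLinearMap))))))
        (fourSplit3 k A a b c d))
  /-- `φ(a, 1, b) = ε(a) ε(b)`. -/
  phi_one_mid : ∀ a b : A, phi a one b = counit (R := k) a * counit (R := k) b
  /-- `φ` and `φ⁻¹` are convolution inverse to each other. -/
  phi_inv : ∀ a b c : A,
    (LinearMap.mul' k k)
      ((TensorProduct.map
          (TensorProduct.lift ((TensorProduct.lift.equiv (RingHom.id k) A A k).toLinearMap ∘ₗ phi))
          (TensorProduct.lift ((TensorProduct.lift.equiv (RingHom.id k) A A k).toLinearMap ∘ₗ phiInv)))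
        (threeSplit k A a b c))
      = counit (R := k) a * (counit (R := k) b * counit (R := k) c)
  inv_phi : ∀ a b c : A,
    (LinearMap.mul' k k)
      ((TensorProduct.map
          (TensorProduct.lift ((TensorProduct.lift.equiv (RingHom.id k) A A k).toLinearMap ∘ₗ phiInv))
          (TensorProduct.lift ((TensorProduct.lift.equiv (RingHom.id k) A A k).toLinearMap ∘ₗ phi)))
        (threeSplit k A a b c))
      = counit (R := k) a * (counit (R := k) b * counit (R := k) c)
  /-- `S` is a coalgebra anti-morphism. -/
  S_comul : ∀ a : A,
    comul (S a) = (TensorProduct.comm k A A) ((TensorProduct.map S S) (comul a))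
  S_counit : ∀ a : A, counit (R := k) (S a) = counit (R := k) a
  /-- `∑ S(a₁) α(a₂) a₃ = α(a) 1`. -/
  antipode_left : ∀ a : A,
    (TensorProduct.lift mul)
      ((TensorProduct.map S
          ((TensorProduct.lid k A).toLinearMap ∘ₗ (TensorProduct.map alpha LinearMap.id)))
        (D2 k A a))
      = alpha a • one
  /-- `∑ a₁ β(a₂) S(a₃) = β(a) 1`. -/
  antipode_right : ∀ a : A,
    (TensorProduct.lift mul)
      ((TensorProduct.map LinearMap.id
          ((TensorProduct.lid k A).toLinearMap ∘ₗ (TensorProduct.map beta S)))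
        (D2 k A a))
      = beta a • one
  /-- `∑ φ(a₁ β(a₂), S(a₃), α(a₄) a₅) = ε(a)`. -/
  antipode_phi : ∀ a : A,
    (TensorProduct.lift ((TensorProduct.lift.equiv (RingHom.id k) A A k).toLinearMap ∘ₗ phi))
      ((TensorProduct.map
          ((TensorProduct.rid k A).toLinearMap ∘ₗ (TensorProduct.map LinearMap.id beta))
          (TensorProduct.map S
            ((TensorProduct.lid k A).toLinearMap ∘ₗ (TensorProduct.map alpha LinearMap.id))))
        ((TensorProduct.assoc k A A (A ⊗[k] (A ⊗[k] A))).symm (D4 k A a)))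
      = counit (R := k) a
  /-- `∑ φ⁻¹(S(a₁), α(a₂) a₃, β(a₄) S(a₅)) = ε(a)`. -/
  antipode_phiInv : ∀ a : A,
    (TensorProduct.lift ((TensorProduct.lift.equiv (RingHom.id k) A A k).toLinearMap ∘ₗ phiInv))
      ((TensorProduct.map S
          (TensorProduct.map
            ((TensorProduct.lid k A).toLinearMap ∘ₗ (TensorProduct.map alpha LinearMap.id))
            ((TensorProduct.lid k A).toLinearMap ∘ₗ (TensorProduct.map beta S))))
        ((TensorProduct.map LinearMap.id
            (TensorProduct.assoc k A A (A ⊗[k] A)).symm.toLinearMap) (D4 k A a)))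
      = counit (R := k) a

/-- The convolution product on `A*`: `(f * g)(a) = ∑ f(a₁) g(a₂)`. -/
noncomputable def DualQH.conv {k A : Type*} [Field k] [AddCommGroup A] [Module k A]
    [Coalgebra k A] (f g : Module.Dual k A) : Module.Dual k A :=
  (LinearMap.mul' k k) ∘ₗ (TensorProduct.map f g) ∘ₗ (comul : A →ₗ[k] A ⊗[k] A)

namespace DualQuasiHopfAlgebra

variable {k A : Type*} [Field k] [AddCommGroup A] [Module k A] [Coalgebra k A]
variable (D : DualQuasiHopfAlgebra k A)


/-- The space of left integrals on `A`: `T` with `a* T = a*(1) T` for all `a* ∈ A*`. -/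
noncomputable def leftIntegrals : Submodule k (Module.Dual k A) where
  carrier := {T | ∀ f : Module.Dual k A, DualQH.conv f T = f D.one • T}
  add_mem' := by
    intro T T' hT hT' f
    have : DualQH.conv f (T + T') = DualQH.conv f T + DualQH.conv f T' := by
      unfold DualQH.conv
      simp only [TensorProduct.map_add_right, LinearMap.comp_add, LinearMap.add_comp]
    rw [this, hT f, hT' f, smul_add]
  zero_mem' := by
    intro f
    have : DualQH.conv f 0 = 0 := by
      unfold DualQH.conv
      simp only [TensorProduct.map_zero_right, LinearMap.comp_zero, LinearMap.zero_comp]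
    simp [this]
  smul_mem' := by
    intro c T hT f
    have : DualQH.conv f (c • T) = c • DualQH.conv f T := by
      unfold DualQH.conv
      simp only [TensorProduct.map_smul_right, LinearMap.comp_smul, LinearMap.smul_comp]
    rw [this, hT f, smul_comm]

/-- The space of right integrals on `A`: `T` with `T a* = a*(1) T` for all `a* ∈ A*`. -/
noncomputable def rightIntegrals : Submodule k (Module.Dual k A) where
  carrier := {T | ∀ f : Module.Dual k A, DualQH.conv T f = f D.one • T}
  add_mem' := by
    intro T T' hT hT' f
    have : DualQH.conv (T + T') f = DualQH.conv T f + DualQH.conv T' f := by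
      unfold DualQH.conv
      simp only [TensorProduct.map_add_left, LinearMap.comp_add, LinearMap.add_comp]
    rw [this, hT f, hT' f, smul_add]
  zero_mem' := by
    intro f
    have : DualQH.conv 0 f = 0 := by
      unfold DualQH.conv
      simp only [TensorProduct.map_zero_left, LinearMap.comp_zero, LinearMap.zero_comp]
    simp [this]
  smul_mem' := by
    intro c T hT f
    have : DualQH.conv (c • T) f = c • DualQH.conv T f := by
      unfold DualQH.conv
      simp only [TensorProduct.map_smul_left, LinearMap.comp_smul, LinearMap.smul_comp]
    rw [this, hT f, smul_comm]

end DualQuasiHopfAlgebra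

/-! For a grouplike `g` every iterated coproduct of `g` is `g ⊗ ⋯ ⊗ g`, so the antipode axioms
collapse to `β(g) • g S(g) = β(g) • 1`, `α(g) • S(g) g = α(g) • 1` and
`α(g) β(g) φ(g, S g, g) = ε(g) = 1`. The last identity makes `α(g)` and `β(g)` nonzero,
so they cancel from the first two. -/

namespace DualQH

variable {k A : Type*} [Field k] [AddCommGroup A] [Module k A] [Coalgebra k A] {g : A}

theorem D2_of_comul_eq (hg : comul g = g ⊗ₜ[k] g) : D2 k A g = g ⊗ₜ[k] (g ⊗ₜ[k] g) := by
  simp [D2, hg]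

theorem D4_of_comul_eq (hg : comul g = g ⊗ₜ[k] g) :
    D4 k A g = g ⊗ₜ[k] (g ⊗ₜ[k] (g ⊗ₜ[k] (g ⊗ₜ[k] g))) := by
  simp [D4, D2_of_comul_eq hg, hg]

end DualQH

namespace DualQuasiHopfAlgebra

variable {k A : Type*} [Field k] [AddCommGroup A] [Module k A] [Coalgebra k A]
  (D : DualQuasiHopfAlgebra k A) {g : A}

theorem beta_smul_mul_S_of_comul_eq (hg : comul g = g ⊗ₜ[k] g) :
    D.beta g • D.mul g (D.S g) = D.beta g • D.one := by
  simpa [D2_of_comul_eq hg] using D.antipode_right g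

theorem alpha_smul_S_mul_of_comul_eq (hg : comul g = g ⊗ₜ[k] g) :
    D.alpha g • D.mul (D.S g) g = D.alpha g • D.one := by
  simpa [D2_of_comul_eq hg] using D.antipode_left g

theorem alpha_mul_beta_mul_phi_of_isGroupLikeElem (hg : IsGroupLikeElem k g) :
    D.alpha g * (D.beta g * D.phi g (D.S g) g) = 1 := by
  simpa [D4_of_comul_eq hg.comul_eq_tmul_self, hg.counit_eq_one] using D.antipode_phi g

theorem alpha_ne_zero_of_isGroupLikeElem (hg : IsGroupLikeElem k g) : D.alpha g ≠ 0 :=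
  left_ne_zero_of_mul_eq_one (D.alpha_mul_beta_mul_phi_of_isGroupLikeElem hg)

theorem beta_ne_zero_of_isGroupLikeElem (hg : IsGroupLikeElem k g) : D.beta g ≠ 0 :=
  left_ne_zero_of_mul (right_ne_zero_of_mul_eq_one (D.alpha_mul_beta_mul_phi_of_isGroupLikeElem hg))

theorem mul_S_of_isGroupLikeElem (hg : IsGroupLikeElem k g) : D.mul g (D.S g) = D.one :=
  smul_right_injective A (D.beta_ne_zero_of_isGroupLikeElem hg) (D.beta_smul_mul_S_of_comul_eq hg.comul_eq_tmul_self)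

theorem S_mul_of_isGroupLikeElem (hg : IsGroupLikeElem k g) : D.mul (D.S g) g = D.one :=
  smul_right_injective A (D.alpha_ne_zero_of_isGroupLikeElem hg) (D.alpha_smul_S_mul_of_comul_eq hg.comul_eq_tmul_self)

end DualQuasiHopfAlgebra

/-- every grouplike element `g` of a dual quasi-Hopf algebra is
invertible, with two-sided inverse `S(g)`. -/
theorem grouplike_invertible {k A : Type*} [Field k] [AddCommGroup A] [Module k A]
    [Coalgebra k A] (D : DualQuasiHopfAlgebra k A) (g : A)
    (hg : comul g = g ⊗ₜ[k] g) (hg' : counit (R := k) g = 1) :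
    D.mul g (D.S g) = D.one ∧ D.mul (D.S g) g = D.one :=
  have hG : IsGroupLikeElem k g := ⟨hg', hg⟩
  ⟨D.mul_S_of_isGroupLikeElem hG, D.S_mul_of_isGroupLikeElem hG⟩
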